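/- Let K ⊂ ℝⁿ be a star-shaped body with respect to the origin (i.e., for every x ∈ K and t ∈ [0,1], tx ∈ K), and let γ be the standard Gaussian measure on ℝⁿ with density (2π)^{−n/2} e^{−|x|²/2}. Then ∫_K |x|² dγ(x) ≤ n·γ(K). -/

import Mathlib

open MeasureTheory ProbabilityTheory Set Real Filter Module
open scoped Pointwise

/-!
Write `γ = c e^{-q/2} dx` with `q x = |x|²` and `d = n`. For `0 < t ≤ 1`,
`g t := ∫_{tK} e^{-q/2} dx = t^d ∫_K e^{-t² q/2} dx`, and `g` is monotone because star-shapedness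
makes the dilates `tK` increase with `t`. Hence `g' 1 = ∫_K (d - q) e^{-q/2} dx ≥ 0`, which is the
inequality after multiplying by `c`.
-/

theorem MeasureTheory.Measure.pi_withDensity_ofReal {ι : Type*} [Fintype ι] {α : ι → Type*}
    [∀ i, MeasurableSpace (α i)] (μ : ∀ i, Measure (α i)) [∀ i, SigmaFinite (μ i)]
    {f : ∀ i, α i → ℝ} (hf0 : ∀ i, 0 ≤ f i) (hf : ∀ i, Integrable (f i) (μ i)) :
    Measure.pi (fun i ↦ (μ i).withDensity fun x ↦ ENNReal.ofReal (f i x)) =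
      (Measure.pi μ).withDensity fun x ↦ ENNReal.ofReal (∏ i, f i (x i)) := by
  refine Measure.pi_eq fun s hs ↦ ?_
  have hf0' : ∀ i, 0 ≤ᵐ[(μ i).restrict (s i)] f i := fun i ↦ ae_of_all _ (hf0 i)
  simp only [withDensity_apply _ (hs _), withDensity_apply _ (MeasurableSet.univ_pi hs),
    Measure.restrict_pi_pi, ← ofReal_integral_eq_lintegral_ofReal (hf _).integrableOn (hf0' _)]
  rw [← ofReal_integral_eq_lintegral_ofReal
    (Integrable.fintype_prod_dep fun i ↦ (hf i).integrableOn)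
    (ae_of_all _ fun x ↦ Finset.prod_nonneg fun i _ ↦ hf0 i _), integral_fintype_prod_eq_prod,
    ENNReal.ofReal_prod_of_nonneg fun i _ ↦ integral_nonneg_of_ae (hf0' i)]

theorem setIntegral_withDensity_ofReal {X : Type*} [MeasurableSpace X] {μ : Measure X} [SFinite μ]
    {G : X → ℝ} (hG : Measurable G) (hG0 : 0 ≤ G) (g : X → ℝ) (s : Set X) :
    ∫ x in s, g x ∂μ.withDensity (fun x ↦ ENNReal.ofReal (G x)) = ∫ x in s, G x * g x ∂μ := by
  rw [setIntegral_withDensity_eq_setIntegral_toReal_smul' s hG.ennreal_ofReal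
    (ae_of_all _ fun _ ↦ ENNReal.ofReal_lt_top)]
  simp only [ENNReal.toReal_ofReal (hG0 _), smul_eq_mul]

theorem pi_gaussianReal_eq_withDensity (ι : Type*) [Fintype ι] :
    Measure.pi (fun _ : ι ↦ gaussianReal 0 1) = volume.withDensity fun x ↦
      ENNReal.ofReal ((√(2 * π))⁻¹ ^ Fintype.card ι * exp (-(∑ i, x i ^ 2) / 2)) := by
  simp only [gaussianReal_of_var_ne_zero 0 one_ne_zero, gaussianPDF_def]
  rw [Measure.pi_withDensity_ofReal _ (fun _ ↦ gaussianPDFReal_nonneg 0 1)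
    (fun _ ↦ integrable_gaussianPDFReal 0 1), volume_pi]
  simp only [gaussianPDFReal, NNReal.coe_one, mul_one, sub_zero, Finset.prod_mul_distrib,
    Finset.prod_const, Finset.card_univ, ← exp_sum, ← Finset.sum_div, Finset.sum_neg_distrib]

section StarConvex

variable {E : Type*} [AddCommGroup E] [Module ℝ E] {K : Set E}

theorem StarConvex.smul_set_subset_smul_set (hK : StarConvex ℝ 0 K) {s t : ℝ} (hs : 0 ≤ s)
    (ht : 0 < t) (hst : s ≤ t) : s • K ⊆ t • K := by
  rintro _ ⟨x, hx, rfl⟩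
  refine ⟨(s / t) • x, hK.smul_mem hx (by positivity) ((div_le_one ht).2 hst), ?_⟩
  simp only [smul_smul, mul_div_cancel₀ _ ht.ne']

theorem StarConvex.monotoneOn_setIntegral_smul_set [MeasurableSpace E] (μ : Measure E)
    (hK : StarConvex ℝ 0 K) {f : E → ℝ} (hf0 : 0 ≤ f) (hf : IntegrableOn f K μ) :
    MonotoneOn (fun t : ℝ ↦ ∫ x in t • K, f x ∂μ) (Ioc 0 1) := by
  intro s hs t ht hst
  have htK : t • K ⊆ K := by simpa using hK.smul_set_subset_smul_set ht.1.le one_pos ht.2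
  exact setIntegral_mono_set (hf.mono_set htK) (ae_of_all _ fun x ↦ hf0 x)
    (hK.smul_set_subset_smul_set hs.1.le ht.1 hst).eventuallyLE

end StarConvex

theorem hasDerivAt_setIntegral_of_isCompact {X : Type*} [TopologicalSpace X] [MeasurableSpace X]
    [OpensMeasurableSpace X] [T2Space X] {μ : Measure X} [IsFiniteMeasureOnCompacts μ] {K : Set X}
    (hK : IsCompact K) {F F' : ℝ → X → ℝ} (hF : Continuous F.uncurry) (hF' : Continuous F'.uncurry)
    (hFF' : ∀ t x, HasDerivAt (F · x) (F' t x) t) (t₀ : ℝ) :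
    HasDerivAt (fun t ↦ ∫ x in K, F t x ∂μ) (∫ x in K, F' t₀ x ∂μ) t₀ := by
  have hcont : ∀ {G : ℝ → X → ℝ}, Continuous G.uncurry → ∀ t, Continuous (G t) :=
    fun hG t ↦ hG.comp (Continuous.prodMk_right t)
  obtain ⟨C, hC⟩ := ((isCompact_closedBall t₀ 1).prod hK).exists_bound_of_continuousOn
    hF'.continuousOn
  refine (hasDerivAt_integral_of_dominated_loc_of_deriv_le (Metric.ball_mem_nhds t₀ one_pos)
    (Eventually.of_forall fun t ↦ (hcont hF t).aestronglyMeasurable)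
    ((hcont hF t₀).continuousOn.integrableOn_compact hK) (hcont hF' t₀).aestronglyMeasurable
    ((ae_restrict_mem hK.measurableSet).mono fun x hx t ht ↦
      hC (t, x) ⟨Metric.ball_subset_closedBall ht, hx⟩)
    (integrableOn_const hK.measure_lt_top.ne) (ae_of_all _ fun x t _ ↦ hFF' t x)).2

theorem hasDerivAt_pow_mul_exp_neg_sq_mul_div_two (d : ℕ) (a t : ℝ) :
    HasDerivAt (fun s ↦ s ^ d * exp (-(s ^ 2 * a) / 2))
      ((d * t ^ (d - 1) - t ^ (d + 1) * a) * exp (-(t ^ 2 * a) / 2)) t := by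
  refine ((hasDerivAt_pow d t).mul
    (((hasDerivAt_pow 2 t).mul_const a).neg.div_const 2).exp).congr_deriv ?_
  simp only [Pi.neg_apply, pow_succ, Nat.cast_ofNat]
  ring

section HaarMeasure

variable {E : Type*} [NormedAddCommGroup E] [NormedSpace ℝ E] [MeasurableSpace E] [BorelSpace E]
  [FiniteDimensional ℝ E] (μ : Measure E) [μ.IsAddHaarMeasure] {K : Set E}

theorem StarConvex.setIntegral_mul_exp_neg_div_two_le (hK : StarConvex ℝ 0 K) (hKc : IsCompact K)
    {q : E → ℝ} (hq : Continuous q) (hq_smul : ∀ (t : ℝ) x, q (t • x) = t ^ 2 * q x) :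
    ∫ x in K, q x * exp (-q x / 2) ∂μ ≤ finrank ℝ E * ∫ x in K, exp (-q x / 2) ∂μ := by
  have hint : ∀ {f : E → ℝ}, Continuous f → IntegrableOn f K μ :=
    fun hf ↦ hf.continuousOn.integrableOn_compact hKc
  have hderiv := hasDerivAt_setIntegral_of_isCompact (μ := μ) hKc (by fun_prop) (by fun_prop)
    (fun t x ↦ hasDerivAt_pow_mul_exp_neg_sq_mul_div_two (finrank ℝ E) (q x) t) 1
  have hscale : EqOn (fun t : ℝ ↦ ∫ x in t • K, exp (-q x / 2) ∂μ)
      (fun t ↦ ∫ x in K, t ^ finrank ℝ E * exp (-(t ^ 2 * q x) / 2) ∂μ) (Ioc 0 1) := by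
    intro t ht
    simp only [integral_const_mul, ← hq_smul,
      Measure.setIntegral_comp_smul_of_pos μ (fun x ↦ exp (-q x / 2)) K ht.1, smul_eq_mul,
      mul_inv_cancel_left₀ (pow_pos ht.1 _).ne']
  have hmono := hK.monotoneOn_setIntegral_smul_set μ (fun x ↦ (exp_pos (-q x / 2)).le)
    (hint (by fun_prop))
  have hacc : AccPt (1 : ℝ) (𝓟 (Ioc 0 1)) := by
    rw [accPt_principal_iff_nhdsWithin, Ioc_sdiff_right]
    exact right_nhdsWithin_Ioo_neBot one_pos
  have hnonneg := (hderiv.hasDerivWithinAt.congr hscale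
    (hscale ⟨one_pos, le_rfl⟩)).nonneg_of_monotoneOn hacc hmono
  simp only [one_pow, one_mul, mul_one, sub_mul] at hnonneg
  rw [integral_sub (hint (by fun_prop)) (hint (by fun_prop)), integral_const_mul] at hnonneg
  linarith

end HaarMeasure

theorem stmt_4_general (n : ℕ) (K : Set (Fin n → ℝ)) (hKc : IsCompact K)
    (hstar : ∀ x ∈ K, ∀ t ∈ Set.Icc (0:ℝ) 1, t • x ∈ K)
    (γ : Measure (Fin n → ℝ))
    (hγ : γ = Measure.pi fun _ : Fin n => ProbabilityTheory.gaussianReal 0 1) :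
    ∫ x in K, (∑ i, x i ^ 2) ∂γ ≤ n * (γ K).toReal := by
  have hK : StarConvex ℝ 0 K := starConvex_zero_iff.2 fun x hx t ht0 ht1 ↦ hstar x hx t ⟨ht0, ht1⟩
  set q : (Fin n → ℝ) → ℝ := fun x ↦ ∑ i, x i ^ 2
  set c : ℝ := (√(2 * π))⁻¹ ^ n
  have hkey := hK.setIntegral_mul_exp_neg_div_two_le volume hKc (q := q) (by fun_prop)
    fun t x ↦ by simp only [q, Pi.smul_apply, smul_eq_mul, mul_pow, Finset.mul_sum]
  rw [finrank_fin_fun] at hkey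
  have hγK : (γ K).toReal = ∫ x in K, (1 : ℝ) ∂γ := by simp [measureReal_def]
  rw [hγK, hγ, pi_gaussianReal_eq_withDensity, Fintype.card_fin,
    setIntegral_withDensity_ofReal (by fun_prop) (fun x ↦ by positivity),
    setIntegral_withDensity_ofReal (by fun_prop) (fun x ↦ by positivity)]
  calc ∫ x in K, c * exp (-q x / 2) * q x
      = c * ∫ x in K, q x * exp (-q x / 2) := by
        rw [← integral_const_mul]
        simp only [mul_comm, mul_left_comm]
    _ ≤ c * (n * ∫ x in K, exp (-q x / 2)) := by gcongr
    _ = n * ∫ x in K, c * exp (-q x / 2) * 1 := by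
        simp only [mul_one, integral_const_mul]
        ring

/-- For a compact star-shaped (w.r.t. the origin) body `K ⊆ ℝⁿ` and the standard Gaussian
measure `γ`, one has `∫_K |x|² dγ ≤ n·γ(K)`. -/
theorem stmt_4 (n : ℕ) (K : Set (Fin n → ℝ)) (hKc : IsCompact K) (h0 : (0 : Fin n → ℝ) ∈ K)
    (hstar : ∀ x ∈ K, ∀ t ∈ Set.Icc (0:ℝ) 1, t • x ∈ K)
    (γ : Measure (Fin n → ℝ))
    (hγ : γ = Measure.pi fun _ : Fin n => ProbabilityTheory.gaussianReal 0 1) :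
    ∫ x in K, (∑ i, x i ^ 2) ∂γ ≤ n * (γ K).toReal :=
  stmt_4_general n K hKc hstar γ hγ
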